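/- Assume zero no-shows (all $\lambda_j = 1$) and non-increasing idle time costs $c_1 \ge c_2 \ge \dots \ge c_{n+1}$. For any fixed sequence $\pi$, the ASAP appointment times $A_1 = 0$, $A_i = \left( \sum_{k=1}^{i-1}\sum_j \pi_{kj}\bar{p}_j - \sum_j \pi_{ij} W_j \right)^+$ for $i \ge 2$ are optimal for the Robust Appointment Scheduling Problem with Waiting Time Guarantees: they are feasible, and any feasible appointment vector $A'$ has worst-case total cost at least that of $A$. -/
import Mathlib


/-- Completion times from appointment times `A` and service durations `sv`. -/
noncomputable def ctimes7 (A sv : ℕ → ℝ) : ℕ → ℝ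
  | 0 => 0
  | i + 1 => max (A (i + 1)) (ctimes7 A sv i) + sv (i + 1)

/-- Total cost (idle time plus terminal idle/overtime) of schedule `A` under
service-time scenario `p`, with zero no-shows and sequence `asg`. -/
noncomputable def cost7 (n : ℕ) (asg : ℕ → ℕ) (c : ℕ → ℝ) (co L : ℝ)
    (A p : ℕ → ℝ) : ℝ :=
  (∑ i ∈ Finset.Icc 1 n,
      c i * max (A i - ctimes7 A (fun k => p (asg k)) (i - 1)) 0) +
    max (c (n + 1) * (L - ctimes7 A (fun k => p (asg k)) n))
      (co * (ctimes7 A (fun k => p (asg k)) n - L))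

/-- Worst-case total cost of schedule `A` over the box of service times. -/
noncomputable def wcost7 (n : ℕ) (asg : ℕ → ℕ) (c : ℕ → ℝ) (co L : ℝ)
    (lo hi A : ℕ → ℝ) : ℝ :=
  sSup {x | ∃ p : ℕ → ℝ, (∀ j, p j ∈ Set.Icc (lo j) (hi j)) ∧
    x = cost7 n asg c co L A p}

/-- Feasibility: `A 1 = 0`, nonnegative appointment times, and every worst-case
waiting time within the guarantee. -/
def feas7 (n : ℕ) (asg : ℕ → ℕ) (lo hi W A : ℕ → ℝ) : Prop :=
  A 1 = 0 ∧ (∀ i, 1 ≤ i → i ≤ n → 0 ≤ A i) ∧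
    ∀ p : ℕ → ℝ, (∀ j, p j ∈ Set.Icc (lo j) (hi j)) →
      ∀ i, 1 ≤ i → i ≤ n →
        ctimes7 A (fun k => p (asg k)) (i - 1) - A i ≤ W (asg i)

lemma ctimes7_zero (A sv : ℕ → ℝ) : ctimes7 A sv 0 = 0 := rfl

lemma ctimes7_succ (A sv : ℕ → ℝ) (m : ℕ) :
    ctimes7 A sv (m + 1) = max (A (m + 1)) (ctimes7 A sv m) + sv (m + 1) := rfl

lemma ctimes7_nonneg (A sv : ℕ → ℝ) (hsv : ∀ k, 0 ≤ sv k) (m : ℕ) :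
    0 ≤ ctimes7 A sv m := by
  induction m with
  | zero => simp [ctimes7_zero]
  | succ m ih =>
      rw [ctimes7_succ]
      have h1 := le_max_right (A (m + 1)) (ctimes7 A sv m)
      have h2 := hsv (m + 1)
      linarith

lemma ctimes7_mono_sv (A sv sv' : ℕ → ℝ) (h : ∀ k, sv k ≤ sv' k) (m : ℕ) :
    ctimes7 A sv m ≤ ctimes7 A sv' m := by
  induction m with
  | zero => simp [ctimes7_zero]
  | succ m ih =>
      rw [ctimes7_succ, ctimes7_succ]
      have h1 := h (m + 1)
      have h2 := max_le_max (le_refl (A (m + 1))) ih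
      linarith

lemma sum_le_ctimes7 (A sv : ℕ → ℝ) (m : ℕ) :
    ∑ k ∈ Finset.Icc 1 m, sv k ≤ ctimes7 A sv m := by
  induction m with
  | zero => simp [ctimes7_zero]
  | succ m ih =>
      rw [Finset.sum_Icc_succ_top (Nat.succ_le_succ (Nat.zero_le m)), ctimes7_succ]
      have := le_max_right (A (m + 1)) (ctimes7 A sv m)
      linarith

lemma ctimes7_le_sum (A sv hi' : ℕ → ℝ) (hsv : ∀ k, sv k ≤ hi' k) (m : ℕ)
    (hA : ∀ k, 1 ≤ k → k ≤ m → A k ≤ ∑ j ∈ Finset.Icc 1 (k - 1), hi' j) :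
    ctimes7 A sv m ≤ ∑ k ∈ Finset.Icc 1 m, hi' k := by
  induction m with
  | zero => simp [ctimes7_zero]
  | succ m ih =>
      have ih' := ih (fun k h1 h2 => hA k h1 (h2.trans (Nat.le_succ m)))
      rw [Finset.sum_Icc_succ_top (Nat.succ_le_succ (Nat.zero_le m)), ctimes7_succ]
      have hAm := hA (m + 1) (Nat.succ_le_succ (Nat.zero_le m)) (le_refl _)
      simp only [Nat.add_sub_cancel] at hAm
      have h1 := hsv (m + 1)
      have h2 := max_le hAm ih'
      linarith

/-- Key invariant: completion times under the smaller schedule are smaller, and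
the weighted idle-time difference dominates `c (m+1)` times the completion-time gap. -/
lemma key7 (n : ℕ) (c : ℕ → ℝ) (hcdec : ∀ i j, i ≤ j → c j ≤ c i)
    (A A' sv : ℕ → ℝ) (hAA' : ∀ k, 1 ≤ k → k ≤ n → A k ≤ A' k) :
    ∀ m, m ≤ n →
      ctimes7 A sv m ≤ ctimes7 A' sv m ∧
      (∑ i ∈ Finset.Icc 1 m, c i * max (A i - ctimes7 A sv (i - 1)) 0)
          + c (m + 1) * (ctimes7 A' sv m - ctimes7 A sv m)
        ≤ ∑ i ∈ Finset.Icc 1 m, c i * max (A' i - ctimes7 A' sv (i - 1)) 0 := by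
  intro m
  induction m with
  | zero => intro _; simp [ctimes7_zero]
  | succ m ih =>
      intro hmn
      obtain ⟨hC, hS⟩ := ih (le_trans (Nat.le_succ m) hmn)
      set C := ctimes7 A sv m with hCdef
      set C' := ctimes7 A' sv m with hC'def
      have ha : A (m + 1) ≤ A' (m + 1) := hAA' (m + 1) (Nat.succ_le_succ (Nat.zero_le m)) hmn
      have hcc : c (m + 1 + 1) ≤ c (m + 1) := hcdec _ _ (Nat.le_succ _)
      constructor
      · rw [ctimes7_succ, ctimes7_succ]
        have := max_le_max ha hC
        linarith
      · rw [Finset.sum_Icc_succ_top (Nat.succ_le_succ (Nat.zero_le m)),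
          Finset.sum_Icc_succ_top (Nat.succ_le_succ (Nat.zero_le m)),
          ctimes7_succ, ctimes7_succ]
        simp only [Nat.add_sub_cancel]
        rw [← hCdef, ← hC'def]
        have e1 : max (A (m + 1)) C = C + max (A (m + 1) - C) 0 := by
          rcases le_total (A (m + 1)) C with h | h
          · rw [max_eq_right h, max_eq_right (sub_nonpos.mpr h), add_zero]
          · rw [max_eq_left h, max_eq_left (sub_nonneg.mpr h)]; ring
        have e2 : max (A' (m + 1)) C' = C' + max (A' (m + 1) - C') 0 := by
          rcases le_total (A' (m + 1)) C' with h | h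
          · rw [max_eq_right h, max_eq_right (sub_nonpos.mpr h), add_zero]
          · rw [max_eq_left h, max_eq_left (sub_nonneg.mpr h)]; ring
        rw [e1, e2]
        set ι := max (A (m + 1) - C) 0 with hι
        set ι' := max (A' (m + 1) - C') 0 with hι'
        have hιle : ι ≤ ι' + (C' - C) := by
          rw [hι]
          apply max_le
          · have := le_max_left (A' (m + 1) - C') 0
            rw [hι']; linarith
          · have := le_max_right (A' (m + 1) - C') 0
            rw [hι']; linarith
        have hprod : 0 ≤ (c (m + 1) - c (m + 1 + 1)) * (ι' + (C' - C) - ι) :=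
          mul_nonneg (by linarith) (by linarith)
        nlinarith [hprod, hS]

lemma cost7_mono (n : ℕ) (asg : ℕ → ℕ) (c : ℕ → ℝ) (co L : ℝ)
    (hc : ∀ i, 0 ≤ c i) (hcdec : ∀ i j, i ≤ j → c j ≤ c i) (hco : 0 ≤ co)
    (A A' p : ℕ → ℝ) (hAA' : ∀ k, 1 ≤ k → k ≤ n → A k ≤ A' k) :
    cost7 n asg c co L A p ≤ cost7 n asg c co L A' p := by
  obtain ⟨hC, hS⟩ := key7 n c hcdec A A' (fun k => p (asg k)) hAA' n le_rfl
  unfold cost7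
  set C := ctimes7 A (fun k => p (asg k)) n with hCdef
  set C' := ctimes7 A' (fun k => p (asg k)) n with hC'def
  have hT : max (c (n + 1) * (L - C)) (co * (C - L)) ≤
      max (c (n + 1) * (L - C')) (co * (C' - L)) + c (n + 1) * (C' - C) := by
    apply max_le
    · have := le_max_left (c (n + 1) * (L - C')) (co * (C' - L))
      nlinarith
    · have h1 := le_max_right (c (n + 1) * (L - C')) (co * (C' - L))
      have h2 : co * (C - L) ≤ co * (C' - L) := by nlinarith
      have h3 : 0 ≤ c (n + 1) * (C' - C) := mul_nonneg (hc _) (by linarith)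
      linarith
  linarith


/-- Optimality of the ASAP rule: with zero no-shows and
non-increasing idle time costs, the ASAP appointment times
`A 1 = 0`, `A i = (∑_{k<i} p̄_{asg k} - W_{asg i})⁺` are feasible and any feasible
schedule has worst-case total cost at least that of `A`. -/
theorem asap_optimal_nonincreasing_costs
    (n : ℕ) (asg : ℕ → ℕ) (lo hi W : ℕ → ℝ) (c : ℕ → ℝ) (co L : ℝ)
    (hlo : ∀ j, 0 ≤ lo j) (hlohi : ∀ j, lo j ≤ hi j) (hW : ∀ j, 0 ≤ W j)
    (hc : ∀ i, 0 ≤ c i) (hcdec : ∀ i j, i ≤ j → c j ≤ c i) (hco : 0 ≤ co)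
    (A : ℕ → ℝ) (hA1 : A 1 = 0)
    (hAdef : ∀ i, 2 ≤ i → i ≤ n →
      A i = max ((∑ k ∈ Finset.Icc 1 (i - 1), hi (asg k)) - W (asg i)) 0) :
    feas7 n asg lo hi W A ∧
      ∀ A' : ℕ → ℝ, feas7 n asg lo hi W A' →
        wcost7 n asg c co L lo hi A ≤ wcost7 n asg c co L lo hi A' := by
  have hhi : ∀ j, 0 ≤ hi j := fun j => (hlo j).trans (hlohi j)
  have hSnonneg : ∀ m, (0:ℝ) ≤ ∑ k ∈ Finset.Icc 1 m, hi (asg k) :=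
    fun m => Finset.sum_nonneg (fun k _ => hhi (asg k))
  -- A k ≤ partial sum of hi, for 1 ≤ k ≤ n
  have hAle : ∀ k, 1 ≤ k → k ≤ n → A k ≤ ∑ j ∈ Finset.Icc 1 (k - 1), hi (asg j) := by
    intro k h1 hn
    rcases eq_or_lt_of_le h1 with h | h
    · simp [← h, hA1]
    · have h2 : 2 ≤ k := h
      rw [hAdef k h2 hn]
      apply max_le
      · have := hW (asg k); linarith [hSnonneg (k - 1)]
      · exact hSnonneg (k - 1)
  have hfeasA : feas7 n asg lo hi W A := by
    refine ⟨hA1, ?_, ?_⟩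
    · intro i h1 hn
      rcases eq_or_lt_of_le h1 with h | h
      · rw [← h, hA1]
      · rw [hAdef i h hn]; exact le_max_right _ _
    · intro p hp i h1 hn
      rcases eq_or_lt_of_le h1 with h | h
      · rw [← h, hA1]
        simp [ctimes7_zero]
        exact hW (asg 1)
      · have h2 : 2 ≤ i := h
        have hCle : ctimes7 A (fun k => p (asg k)) (i - 1) ≤
            ∑ k ∈ Finset.Icc 1 (i - 1), hi (asg k) := by
          apply ctimes7_le_sum A (fun k => p (asg k)) (fun k => hi (asg k))
            (fun k => (hp (asg k)).2)
          intro k hk1 hk2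
          exact hAle k hk1 (hk2.trans ((Nat.sub_le i 1).trans hn))
        have hAi : (∑ k ∈ Finset.Icc 1 (i - 1), hi (asg k)) - W (asg i) ≤ A i := by
          rw [hAdef i h2 hn]; exact le_max_left _ _
        linarith
  refine ⟨hfeasA, ?_⟩
  intro A' hfeas'
  obtain ⟨hA'1, hA'pos, hA'wait⟩ := hfeas'
  have hhiBox : ∀ j, hi j ∈ Set.Icc (lo j) (hi j) := fun j => ⟨hlohi j, le_rfl⟩
  have hAA' : ∀ i, 1 ≤ i → i ≤ n → A i ≤ A' i := by
    intro i h1 hn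
    rcases eq_or_lt_of_le h1 with h | h
    · rw [← h, hA1, hA'1]
    · have h2 : 2 ≤ i := h
      have hw := hA'wait hi hhiBox i h1 hn
      have hlb := sum_le_ctimes7 A' (fun k => hi (asg k)) (i - 1)
      rw [hAdef i h2 hn]
      exact max_le (by linarith) (hA'pos i h1 hn)
  unfold wcost7
  have hloBox : ∀ j, lo j ∈ Set.Icc (lo j) (hi j) := fun j => ⟨le_rfl, hlohi j⟩
  have hne : Set.Nonempty {x | ∃ p : ℕ → ℝ, (∀ j, p j ∈ Set.Icc (lo j) (hi j)) ∧
      x = cost7 n asg c co L A p} := ⟨_, lo, hloBox, rfl⟩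
  have hbdd : BddAbove {x | ∃ p : ℕ → ℝ, (∀ j, p j ∈ Set.Icc (lo j) (hi j)) ∧
      x = cost7 n asg c co L A' p} := by
    refine ⟨(∑ i ∈ Finset.Icc 1 n, c i * max (A' i) 0) +
      max (c (n + 1) * L)
        (co * (ctimes7 A' (fun k => hi (asg k)) n - L)), ?_⟩
    rintro x ⟨p, hp, rfl⟩
    unfold cost7
    have hpnn : ∀ k, (0:ℝ) ≤ p (asg k) := fun k => (hlo (asg k)).trans (hp (asg k)).1
    apply add_le_add
    · apply Finset.sum_le_sum
      intro i _
      apply mul_le_mul_of_nonneg_left _ (hc i)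
      apply max_le _ (le_max_right _ _)
      have := ctimes7_nonneg A' (fun k => p (asg k)) hpnn (i - 1)
      have := le_max_left (A' i) (0:ℝ)
      linarith
    · apply max_le_max
      · have := ctimes7_nonneg A' (fun k => p (asg k)) hpnn n
        have := hc (n + 1)
        nlinarith
      · have := ctimes7_mono_sv A' (fun k => p (asg k)) (fun k => hi (asg k))
          (fun k => (hp (asg k)).2) n
        nlinarith
  apply csSup_le hne
  rintro x ⟨p, hp, rfl⟩
  exact le_trans (cost7_mono n asg c co L hc hcdec hco A A' p hAA')
    (le_csSup hbdd ⟨p, hp, rfl⟩)
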